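/- arXiv:1211.6895 — 3 statements merged into one kernel-verified Lean document; each statement's English description precedes it below -/
import Mathlib

section
/- (Uniqueness up to scalar in rational function reconstruction.) Let f ∈ K[x] be monic of degree ℓ + 1 and g ∈ K[x] with deg(g) ≤ ℓ. If r₁ = s₁·f + t₁·g and r₂ = s₂·f + t₂·g are nonzero with deg(r₁) + deg(t₂) < ℓ + 1 and deg(r₂) + deg(t₁) < ℓ + 1, then r₁·t₂ = r₂·t₁. -/
open Polynomial

/-!
Eliminating `g` between the two relations shows that `f` divides `r₁ * t₂ - r₂ * t₁`.
The degree bounds make that difference of degree less than `deg f`, so it vanishes.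
-/

theorem dvd_mul_sub_mul_of_eq_mul_add_mul {R : Type*} [CommRing R]
    {f g r₁ s₁ t₁ r₂ s₂ t₂ : R}
    (h₁ : r₁ = s₁ * f + t₁ * g) (h₂ : r₂ = s₂ * f + t₂ * g) :
    f ∣ r₁ * t₂ - r₂ * t₁ :=
  ⟨s₁ * t₂ - s₂ * t₁, by rw [h₁, h₂]; ring⟩

theorem Polynomial.natDegree_mul_sub_mul_lt {R : Type*} [Ring R] {a b c d : R[X]} {n : ℕ}
    (hab : a.natDegree + b.natDegree < n) (hcd : c.natDegree + d.natDegree < n) :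
    (a * b - c * d).natDegree < n :=
  calc (a * b - c * d).natDegree
      ≤ max (a * b).natDegree (c * d).natDegree := natDegree_sub_le _ _
    _ < n := max_lt (natDegree_mul_le.trans_lt hab) (natDegree_mul_le.trans_lt hcd)

theorem rational_reconstruction_unique_up_to_scalar_general
    {K : Type*} [Field K] (ℓ : ℕ)
    (f g r₁ s₁ t₁ r₂ s₂ t₂ : K[X])
    (hdegf : f.natDegree = ℓ + 1)
    (h₁ : r₁ = s₁ * f + t₁ * g) (h₂ : r₂ = s₂ * f + t₂ * g)
    (hdeg₁ : r₁.natDegree + t₂.natDegree < ℓ + 1)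
    (hdeg₂ : r₂.natDegree + t₁.natDegree < ℓ + 1) :
    r₁ * t₂ = r₂ * t₁ := by
  rw [← sub_eq_zero]
  refine eq_zero_of_dvd_of_natDegree_lt (dvd_mul_sub_mul_of_eq_mul_add_mul h₁ h₂) ?_
  rw [hdegf]
  exact natDegree_mul_sub_mul_lt hdeg₁ hdeg₂

theorem rational_reconstruction_unique_up_to_scalar
    {K : Type*} [Field K] (ℓ : ℕ)
    (f g r₁ s₁ t₁ r₂ s₂ t₂ : K[X])
    (hf : f.Monic) (hdegf : f.natDegree = ℓ + 1) (hg : g.degree ≤ ℓ)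
    (h₁ : r₁ = s₁ * f + t₁ * g) (h₂ : r₂ = s₂ * f + t₂ * g)
    (hr₁ : r₁ ≠ 0) (hr₂ : r₂ ≠ 0) (ht₁ : t₁ ≠ 0) (ht₂ : t₂ ≠ 0)
    (hdeg₁ : r₁.natDegree + t₂.natDegree < ℓ + 1)
    (hdeg₂ : r₂.natDegree + t₁.natDegree < ℓ + 1) :
    r₁ * t₂ = r₂ * t₁ :=
  rational_reconstruction_unique_up_to_scalar_general ℓ f g r₁ s₁ t₁ r₂ s₂ t₂ hdegf h₁ h₂ hdeg₁
    hdeg₂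
end

section
/- Let f = ∏ⱼ₌₀^k (x − xⱼ)^{aⱼ} with ∑ aⱼ = ℓ + 1, and suppose A, B ∈ K[x] with deg(A) ≤ a, deg(B) ≤ b (a + b = ℓ), B(xᵢ) ≠ 0 for all i, solve the osculatory interpolation problem, i.e., f divides A − B·g where g is the Hermite interpolation polynomial. If A₁, B₁ is another such solution, then A₁·B = A·B₁. -/
/-!
Both `A * B₁ - A₁ * B = (A - B * g) * B₁ - (A₁ - B₁ * g) * B` and the two solution conditions
make `f` divide the cross difference `A * B₁ - A₁ * B`, whose degree is at most `a + b = ℓ`.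
Since `f` has degree `ℓ + 1`, the cross difference vanishes.
-/

open Polynomial

namespace Polynomial

theorem dvd_cross_sub_of_dvd_sub {R : Type*} [CommRing R] {f g A B A₁ B₁ : R}
    (hsol : f ∣ A - B * g) (hsol₁ : f ∣ A₁ - B₁ * g) : f ∣ A * B₁ - A₁ * B := by
  have hcross : A * B₁ - A₁ * B = (A - B * g) * B₁ - (A₁ - B₁ * g) * B := by ring
  rw [hcross]
  exact dvd_sub (hsol.mul_right _) (hsol₁.mul_right _)

theorem degree_prod_X_sub_C_pow {R : Type*} [CommRing R] [Nontrivial R] {ι : Type*}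
    (s : Finset ι) (x : ι → R) (m : ι → ℕ) :
    (∏ j ∈ s, (X - C (x j)) ^ m j).degree = ((∑ j ∈ s, m j : ℕ) : WithBot ℕ) := by
  rw [degree_prod_of_monic _ _ fun j _ ↦ (monic_X_sub_C (x j)).pow (m j)]
  simp [degree_pow']

theorem mul_eq_mul_of_dvd_sub_of_degree_le {R : Type*} [CommRing R] [NoZeroDivisors R]
    {f g A B A₁ B₁ : R[X]} {a b : ℕ} (hf : ((a + b : ℕ) : WithBot ℕ) < f.degree)
    (hA : A.degree ≤ a) (hB : B.degree ≤ b) (hA₁ : A₁.degree ≤ a) (hB₁ : B₁.degree ≤ b)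
    (hsol : f ∣ A - B * g) (hsol₁ : f ∣ A₁ - B₁ * g) : A₁ * B = A * B₁ := by
  have hmul : ∀ {P Q : R[X]}, P.degree ≤ a → Q.degree ≤ b → (P * Q).degree ≤ (a + b : ℕ) :=
    fun hP hQ ↦ by exact_mod_cast degree_mul_le_of_le hP hQ
  have hdeg : (A * B₁ - A₁ * B).degree < f.degree :=
    (degree_sub_le _ _).trans_lt ((max_le (hmul hA hB₁) (hmul hA₁ hB)).trans_lt hf)
  have hzero := eq_zero_of_dvd_of_degree_lt (dvd_cross_sub_of_dvd_sub hsol hsol₁) hdeg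
  exact (sub_eq_zero.mp hzero).symm

end Polynomial

theorem osculatory_uniqueness_general
    {K : Type*} [Field K] (k a b ℓ : ℕ) (hℓ : ℓ = a + b)
    (x : Fin (k + 1) → K)
    (m : Fin (k + 1) → ℕ) (hsum : ∑ j, m j = ℓ + 1)
    (f g : K[X]) (hf : f = ∏ j, (X - C (x j)) ^ (m j))
    (A B : K[X]) (hA : A.degree ≤ a) (hB : B.degree ≤ b)
    (hsol : f ∣ (A - B * g))
    (A₁ B₁ : K[X]) (hA₁ : A₁.degree ≤ a) (hB₁ : B₁.degree ≤ b)
    (hsol₁ : f ∣ (A₁ - B₁ * g)) :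
    A₁ * B = A * B₁ := by
  have hdegf : f.degree = (ℓ + 1 : ℕ) := by
    rw [hf, degree_prod_X_sub_C_pow, hsum]
  refine mul_eq_mul_of_dvd_sub_of_degree_le ?_ hA hB hA₁ hB₁ hsol hsol₁
  rw [hdegf, ← hℓ]
  exact_mod_cast ℓ.lt_succ_self

theorem osculatory_uniqueness
    {K : Type*} [Field K] [CharZero K] (k a b ℓ : ℕ) (hℓ : ℓ = a + b)
    (x : Fin (k + 1) → K) (hx : Function.Injective x)
    (m : Fin (k + 1) → ℕ) (hm : ∀ j, 0 < m j) (hsum : ∑ j, m j = ℓ + 1)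
    (f g : K[X]) (hf : f = ∏ j, (X - C (x j)) ^ (m j)) (hg : g.degree ≤ ℓ)
    (A B : K[X]) (hA : A.degree ≤ a) (hB : B.degree ≤ b)
    (hBx : ∀ i, B.eval (x i) ≠ 0) (hsol : f ∣ (A - B * g))
    (A₁ B₁ : K[X]) (hA₁ : A₁.degree ≤ a) (hB₁ : B₁.degree ≤ b)
    (hB₁x : ∀ i, B₁.eval (x i) ≠ 0) (hsol₁ : f ∣ (A₁ - B₁ * g)) :
    A₁ * B = A * B₁ :=
  osculatory_uniqueness_general k a b ℓ hℓ x m hsum f g hf A B hA hB hsol A₁ B₁ hA₁ hB₁ hsol₁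
end

section
/- In the construction of Theorem 3, let r = s·f + t·g with f = ∏ᵢ₌₀^ℓ (x − xᵢ) and g the Lagrange interpolant of (xᵢ, yᵢ), and assume gcd(s, t) = 1; then gcd(r, t) = 1 if and only if t(xᵢ) ≠ 0 for all 0 ≤ i ≤ ℓ. -/
open Polynomial

theorem bezout_coprime_iff_no_root
    {K : Type*} [Field K] (ℓ : ℕ)
    (x : Fin (ℓ + 1) → K) (hx : Function.Injective x) (y : Fin (ℓ + 1) → K)
    (f g : K[X]) (hf : f = ∏ i, (X - C (x i)))
    (hg : g.degree ≤ ℓ) (hgx : ∀ i, g.eval (x i) = y i)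
    (r s t : K[X]) (hr : r = s * f + t * g) (hst : IsCoprime s t) :
    IsCoprime r t ↔ ∀ i, t.eval (x i) ≠ 0 := by
  have hfroot : ∀ i, f.eval (x i) = 0 := by
    intro i
    rw [hf, eval_prod]
    exact Finset.prod_eq_zero (Finset.mem_univ i) (by simp)
  constructor
  · rintro ⟨a, b, hab⟩ i ht
    have h1 : (a * r + b * t).eval (x i) = 1 := by rw [hab]; simp
    have hr0 : r.eval (x i) = 0 := by
      rw [hr]; simp [hfroot i, ht]
    rw [eval_add, eval_mul, eval_mul, hr0, ht, mul_zero, mul_zero] at h1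
    simp at h1
  · intro hti
    by_contra hcop
    have ht0 : t ≠ 0 := fun h => hti 0 (by simp [h])
    -- consider gcd
    classical
    set d := EuclideanDomain.gcd r t with hd
    have hdr : d ∣ r := EuclideanDomain.gcd_dvd_left r t
    have hdt : d ∣ t := EuclideanDomain.gcd_dvd_right r t
    have hdu : ¬ IsUnit d := by
      intro hu
      exact hcop (EuclideanDomain.gcd_isUnit_iff.mp hu)
    have hd0 : d ≠ 0 := fun h => ht0 (by
      have := hdt; rw [h] at this; exact zero_dvd_iff.mp this)
    -- d divides s * f
    have hdsf : d ∣ s * f := by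
      have : s * f = r - t * g := by rw [hr]; ring
      rw [this]
      exact dvd_sub hdr (dvd_mul_of_dvd_left hdt g)
    have hsd : IsCoprime s d := hst.of_isCoprime_of_dvd_right hdt
    have hdf : d ∣ f := (hsd.symm).dvd_of_dvd_mul_left hdsf
    obtain ⟨p, hp, hpd⟩ := WfDvdMonoid.exists_irreducible_factor hdu hd0
    have hpf : p ∣ f := hpd.trans hdf
    rw [hf] at hpf
    obtain ⟨i, _, hpi⟩ := (hp.prime).exists_mem_finset_dvd hpf
    have hass : Associated p (X - C (x i)) :=
      hp.associated_of_dvd (irreducible_X_sub_C (x i)) hpi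
    have hXt : (X - C (x i)) ∣ t := (hass.symm.dvd).trans (hpd.trans hdt)
    have : t.eval (x i) = 0 := by
      obtain ⟨q, hq⟩ := hXt
      rw [hq]; simp
    exact hti i this
end
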